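/- Let E be a finite-dimensional real normed vector space and A : E → (E →L[ℝ] E →L[ℝ] E) a smooth map such that each bilinear map A(p) is symmetric and the induced multiplication (X∘Y)(p) = A(p)(X(p))(Y(p)) is associative. Then the Hertling–Manin expression Q(X,Y,Z,W) := [X∘Y, Z∘W] − [X∘Y,Z]∘W − Z∘[X∘Y,W] − X∘[Y, Z∘W] − Y∘[X, Z∘W] + X∘[Y,Z]∘W + X∘Z∘[Y,W] + Y∘[X,Z]∘W + Y∘Z∘[X,W] is a tensor, i.e. it is function-linear in each argument: for every smooth f : E → ℝ and all smooth vector fields X,Y,Z,W, Q(f·X,Y,Z,W) = f·Q(X,Y,Z,W), Q(X,f·Y,Z,W) = f·Q(X,Y,Z,W), Q(X,Y,f·Z,W) = f·Q(X,Y,Z,W), and Q(X,Y,Z,f·W) = f·Q(X,Y,Z,W). -/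

import Mathlib

open ContDiff

variable {E : Type*} [NormedAddCommGroup E] [NormedSpace ℝ E]

/-- Lie bracket of vector fields on a normed space:
`[X,Y](p) = (DY)(p)(X(p)) - (DX)(p)(Y(p))`. -/
noncomputable def lieB (X Y : E → E) : E → E :=
  fun p => fderiv ℝ Y p (X p) - fderiv ℝ X p (Y p)

/-- Multiplication on vector fields induced by a field of bilinear maps `A`:
`(X ∘ Y)(p) = A(p)(X(p))(Y(p))`. -/
noncomputable def mulA (A : E → (E →L[ℝ] E →L[ℝ] E)) (X Y : E → E) : E → E :=
  fun p => A p (X p) (Y p)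

/-- The nine-term Hertling–Manin expression `Q(X,Y,Z,W)`. -/
noncomputable def hmQ (A : E → (E →L[ℝ] E →L[ℝ] E)) (X Y Z W : E → E) : E → E :=
  fun p =>
    lieB (mulA A X Y) (mulA A Z W) p
    - mulA A (lieB (mulA A X Y) Z) W p
    - mulA A Z (lieB (mulA A X Y) W) p
    - mulA A X (lieB Y (mulA A Z W)) p
    - mulA A Y (lieB X (mulA A Z W)) p
    + mulA A (mulA A X (lieB Y Z)) W p
    + mulA A (mulA A X Z) (lieB Y W) p
    + mulA A (mulA A Y (lieB X Z)) W p
    + mulA A (mulA A Y Z) (lieB X W) p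

/-!
Since the multiplication is commutative, `Q` is symmetric in `(X, Y)` and, using associativity
as well, in `(Z, W)`; so it suffices to prove `C^∞`-linearity in `X` and in `Z`. By the Leibniz
rules `[f X, V] = f [X, V] - V(f) X` and `[V, f Z] = f [V, Z] + V(f) Z`, replacing `X` (or `Z`)
by `f X` multiplies every term by `f` up to terms carrying a derivative of `f`, and these cancel
in pairs because `∘` is commutative and associative.
-/

section Leibniz

variable {f : E → ℝ}

lemma lieB_smul_left (hf : Differentiable ℝ f) {X : E → E} (hX : Differentiable ℝ X)
    (Y : E → E) :
    lieB (fun q => f q • X q) Y = fun p => f p • lieB X Y p - fderiv ℝ f p (Y p) • X p := by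
  funext p
  simp only [lieB, fderiv_fun_smul (hf p) (hX p), add_apply, smul_apply,
    ContinuousLinearMap.smulRight_apply, map_smul]
  module

lemma lieB_smul_right (hf : Differentiable ℝ f) {Y : E → E} (hY : Differentiable ℝ Y)
    (X : E → E) :
    lieB X (fun q => f q • Y q) = fun p => f p • lieB X Y p + fderiv ℝ f p (X p) • Y p := by
  funext p
  simp only [lieB, fderiv_fun_smul (hf p) (hY p), add_apply, smul_apply,
    ContinuousLinearMap.smulRight_apply, map_smul]
  module

end Leibniz

section Multiplication

variable (A : E → (E →L[ℝ] E →L[ℝ] E))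

lemma Differentiable.mulA (hA : Differentiable ℝ A) {X Y : E → E} (hX : Differentiable ℝ X)
    (hY : Differentiable ℝ Y) : Differentiable ℝ (mulA A X Y) :=
  (hA.clm_apply hX).clm_apply hY

lemma mulA_smul_left (f : E → ℝ) (X Y : E → E) :
    mulA A (fun p => f p • X p) Y = fun p => f p • mulA A X Y p := by
  funext p; simp [mulA]

lemma mulA_smul_right (f : E → ℝ) (X Y : E → E) :
    mulA A X (fun p => f p • Y p) = fun p => f p • mulA A X Y p := by
  funext p; simp [mulA]

lemma mulA_comm (hsymm : ∀ p u v : E, A p u v = A p v u) (X Y : E → E) :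
    mulA A X Y = mulA A Y X :=
  funext fun p => hsymm p _ _

lemma apply_apply_right_comm (hsymm : ∀ p u v : E, A p u v = A p v u)
    (hassoc : ∀ p u v w : E, A p (A p u v) w = A p u (A p v w)) (p u v w : E) :
    A p (A p u v) w = A p (A p u w) v := by
  rw [hassoc, hsymm p v w, ← hassoc]

end Multiplication

section HertlingManin

variable {A : E → (E →L[ℝ] E →L[ℝ] E)}

lemma hmQ_comm_left (hsymm : ∀ p u v : E, A p u v = A p v u) (X Y Z W : E → E) :
    hmQ A X Y Z W = hmQ A Y X Z W := by
  funext p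
  simp only [hmQ, mulA_comm A hsymm X Y]
  abel

lemma hmQ_comm_right (hsymm : ∀ p u v : E, A p u v = A p v u)
    (hassoc : ∀ p u v w : E, A p (A p u v) w = A p u (A p v w)) (X Y Z W : E → E) :
    hmQ A X Y Z W = hmQ A X Y W Z := by
  funext p
  have hcomm := apply_apply_right_comm A hsymm hassoc p
  simp only [hmQ, mulA_comm A hsymm Z W, mulA]
  rw [hsymm p (lieB (mulA A X Y) Z p) (W p), hsymm p (lieB (mulA A X Y) W p) (Z p),
    hcomm (X p) (lieB Y Z p) (W p), hcomm (X p) (Z p) (lieB Y W p),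
    hcomm (Y p) (lieB X Z p) (W p), hcomm (Y p) (Z p) (lieB X W p)]
  abel

variable {f : E → ℝ}

lemma hmQ_smul_first (hsymm : ∀ p u v : E, A p u v = A p v u)
    (hassoc : ∀ p u v w : E, A p (A p u v) w = A p u (A p v w)) (hA : Differentiable ℝ A)
    (hf : Differentiable ℝ f) {X Y : E → E} (hX : Differentiable ℝ X) (hY : Differentiable ℝ Y)
    (Z W : E → E) : hmQ A (fun p => f p • X p) Y Z W = fun p => f p • hmQ A X Y Z W p := by
  have hXY := hA.mulA A hX hY
  funext p
  simp only [hmQ, mulA_smul_left, lieB_smul_left hf hXY, lieB_smul_left hf hX]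
  simp only [mulA, map_sub, map_smul, sub_apply, smul_apply, smul_sub, smul_add]
  have hYZX : A p (A p (Y p) (Z p)) (X p) = A p (Z p) (A p (Y p) (X p)) := by
    rw [hassoc, hsymm p (Z p) (X p), ← hassoc, hsymm p (A p (Y p) (X p)) (Z p)]
  rw [hYZX, hsymm p (Y p) (X p)]
  module

lemma hmQ_smul_third (hassoc : ∀ p u v w : E, A p (A p u v) w = A p u (A p v w))
    (hA : Differentiable ℝ A) (hf : Differentiable ℝ f) (X Y : E → E) {Z W : E → E}
    (hZ : Differentiable ℝ Z) (hW : Differentiable ℝ W) :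
    hmQ A X Y (fun p => f p • Z p) W = fun p => f p • hmQ A X Y Z W p := by
  have hZW := hA.mulA A hZ hW
  funext p
  simp only [hmQ, mulA_smul_left, mulA_smul_right, lieB_smul_right hf hZW, lieB_smul_right hf hZ]
  simp only [mulA, map_smul, smul_apply, map_add, add_apply, smul_sub, smul_add]
  rw [hassoc p (X p) (Z p) (W p), hassoc p (Y p) (Z p) (W p)]
  module

end HertlingManin

theorem stmt1_general {E : Type*} [NormedAddCommGroup E] [NormedSpace ℝ E]
    (A : E → (E →L[ℝ] E →L[ℝ] E)) (hA : ContDiff ℝ ∞ A)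
    (hsymm : ∀ p u v : E, A p u v = A p v u)
    (hassoc : ∀ p u v w : E, A p (A p u v) w = A p u (A p v w)) :
    ∀ (f : E → ℝ) (X Y Z W : E → E), ContDiff ℝ ∞ f →
      ContDiff ℝ ∞ X → ContDiff ℝ ∞ Y → ContDiff ℝ ∞ Z → ContDiff ℝ ∞ W →
      hmQ A (fun p => f p • X p) Y Z W = (fun p => f p • hmQ A X Y Z W p) ∧
      hmQ A X (fun p => f p • Y p) Z W = (fun p => f p • hmQ A X Y Z W p) ∧
      hmQ A X Y (fun p => f p • Z p) W = (fun p => f p • hmQ A X Y Z W p) ∧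
      hmQ A X Y Z (fun p => f p • W p) = (fun p => f p • hmQ A X Y Z W p) := by
  intro f X Y Z W hf hX hY hZ hW
  have hω : (∞ : WithTop ℕ∞) ≠ 0 := by simp
  have hA' := hA.differentiable hω
  have hf' := hf.differentiable hω
  have hX' := hX.differentiable hω
  have hY' := hY.differentiable hω
  have hZ' := hZ.differentiable hω
  have hW' := hW.differentiable hω
  refine ⟨hmQ_smul_first hsymm hassoc hA' hf' hX' hY' Z W, ?_,
    hmQ_smul_third hassoc hA' hf' X Y hZ' hW', ?_⟩
  · rw [hmQ_comm_left hsymm, hmQ_smul_first hsymm hassoc hA' hf' hY' hX',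
      hmQ_comm_left hsymm Y]
  · rw [hmQ_comm_right hsymm hassoc, hmQ_smul_third hassoc hA' hf' X Y hW' hZ',
      hmQ_comm_right hsymm hassoc X Y W]

/-- the Hertling–Manin expression is a tensor (function-linear in each
argument). -/
theorem stmt1 {E : Type*} [NormedAddCommGroup E] [NormedSpace ℝ E] [FiniteDimensional ℝ E]
    (A : E → (E →L[ℝ] E →L[ℝ] E)) (hA : ContDiff ℝ ∞ A)
    (hsymm : ∀ p u v : E, A p u v = A p v u)
    (hassoc : ∀ p u v w : E, A p (A p u v) w = A p u (A p v w)) :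
    ∀ (f : E → ℝ) (X Y Z W : E → E), ContDiff ℝ ∞ f →
      ContDiff ℝ ∞ X → ContDiff ℝ ∞ Y → ContDiff ℝ ∞ Z → ContDiff ℝ ∞ W →
      hmQ A (fun p => f p • X p) Y Z W = (fun p => f p • hmQ A X Y Z W p) ∧
      hmQ A X (fun p => f p • Y p) Z W = (fun p => f p • hmQ A X Y Z W p) ∧
      hmQ A X Y (fun p => f p • Z p) W = (fun p => f p • hmQ A X Y Z W p) ∧
      hmQ A X Y Z (fun p => f p • W p) = (fun p => f p • hmQ A X Y Z W p) :=
  stmt1_general A hA hsymm hassoc
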